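/- arXiv:1308.5249 — 2 statements merged into one kernel-verified Lean document; each statement's English description precedes it below -/
import Mathlib

section
/- Let v ∈ ℝⁿ with ‖v‖₁ ≤ C and ‖v‖_∞ ≤ C/k for a positive constant C and positive integer k ≤ n. Then v can be written as a convex combination v = Σ_{t=1}^M x_t w_t (x_t ≥ 0, Σ x_t = 1) of k-sparse vectors w_t satisfying ‖w_t‖₁ = ‖v‖₁ and ‖w_t‖_∞ ≤ C/k for every t. -/
open scoped Classical BigOperators

noncomputable def l1 {n : ℕ} (v : Fin n → ℝ) : ℝ := ∑ i, |v i|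

noncomputable def l2 {n : ℕ} (v : Fin n → ℝ) : ℝ := Real.sqrt (∑ i, (v i) ^ 2)

def Sparse {n : ℕ} (k : ℕ) (v : Fin n → ℝ) : Prop :=
  (Finset.univ.filter (fun i => v i ≠ 0)).card ≤ k

def restrict {n : ℕ} (S : Finset (Fin n)) (v : Fin n → ℝ) : Fin n → ℝ :=
  fun i => if i ∈ S then v i else 0

def DRIP {n p d : ℕ} (Φ : Matrix (Fin n) (Fin p) ℝ) (D : Matrix (Fin p) (Fin d) ℝ)
    (m : ℕ) (δ : ℝ) : Prop :=
  ∀ v : Fin d → ℝ, Sparse m v →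
    (1 - δ) * (l2 (D.mulVec v)) ^ 2 ≤ (l2 (Φ.mulVec (D.mulVec v))) ^ 2 ∧
    (l2 (Φ.mulVec (D.mulVec v))) ^ 2 ≤ (1 + δ) * (l2 (D.mulVec v)) ^ 2

def IsLargestK {n : ℕ} (k : ℕ) (a : Fin n → ℝ) (T : Finset (Fin n)) : Prop :=
  T.card = k ∧ ∀ i ∈ T, ∀ j ∉ T, |a j| ≤ |a i|

/-!
Call a coordinate of `v` free if `0 < |v m| < B`, where `B = C / k`. If `v` is not `k`-sparse, at
least two coordinates are free: otherwise all but one of the more than `k` nonzero coordinates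
equal `B` in absolute value, and `‖v‖₁ > k B`. Moving ℓ¹-mass between two free coordinates without
changing their signs preserves `‖v‖₁` and the bound `B`; pushed as far as possible in either
direction, it makes one of the two coordinates vanish or reach `B`. So `v` lies on a segment
between two admissible vectors with fewer free coordinates, and induction on that number shows
that `v` lies in the convex hull of the `k`-sparse ones.
-/

open Finset

section
variable {𝕜 E : Type*} [Field 𝕜] [LinearOrder 𝕜] [IsStrictOrderedRing 𝕜] [AddCommGroup E]
  [Module 𝕜 E]

theorem mem_segment_add_smul_sub_smul (v d : E) {s t : 𝕜} (hs : 0 < s) (ht : 0 < t) :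
    v ∈ segment 𝕜 (v + s • d) (v - t • d) := by
  refine ⟨t / (s + t), s / (s + t), by positivity, by positivity, by field_simp; ring, ?_⟩
  match_scalars <;> field_simp <;> ring

theorem exists_fin_of_mem_convexHull {s : Set E} {x : E} (hx : x ∈ convexHull 𝕜 s) :
    ∃ (M : ℕ) (w : Fin M → 𝕜) (z : Fin M → E),
      (∀ t, 0 ≤ w t) ∧ ∑ t, w t = 1 ∧ (∀ t, z t ∈ s) ∧ ∑ t, w t • z t = x := by
  obtain ⟨ι, _, w, z, hw₀, hw₁, hz, hx⟩ := mem_convexHull_iff_exists_fintype.mp hx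
  let e := Fintype.equivFin ι
  refine ⟨Fintype.card ι, w ∘ e.symm, z ∘ e.symm, fun t => hw₀ _, ?_, fun t => hz _, ?_⟩
  · rwa [← e.symm.sum_comp w] at hw₁
  · rwa [← e.symm.sum_comp (fun i => w i • z i)] at hx

end

theorem abs_add_mul_sign {α : Type*} [CommRing α] [LinearOrder α] [IsStrictOrderedRing α] {x : α}
    (hx : x ≠ 0) {t : α} (ht : 0 ≤ |x| + t) : |x + t * SignType.sign x| = |x| + t := by
  rcases hx.lt_or_gt with hx | hx
  · rw [sign_neg hx, SignType.coe_neg_one, abs_of_neg hx] at *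
    rw [abs_of_nonpos (by linarith)]; ring
  · rw [sign_pos hx, SignType.coe_one, abs_of_pos hx] at *
    rw [abs_of_nonneg (by linarith)]; ring

section
variable {n : ℕ}

noncomputable def freeCoords (B : ℝ) (v : Fin n → ℝ) : Finset (Fin n) :=
  univ.filter fun m => |v m| ∈ Set.Ioo 0 B

theorem mem_freeCoords {B : ℝ} {v : Fin n → ℝ} {m : Fin n} :
    m ∈ freeCoords B v ↔ 0 < |v m| ∧ |v m| < B := by
  simp [freeCoords]

theorem one_lt_card_freeCoords {k : ℕ} {B : ℝ} {v : Fin n → ℝ} (hv : ∀ m, |v m| ≤ B)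
    (hl1 : l1 v ≤ k * B) (hs : ¬ Sparse k v) : 1 < (freeCoords B v).card := by
  set S := univ.filter fun m => v m ≠ 0
  have hS : k < S.card := not_le.mp hs
  by_contra! hfree
  obtain ⟨m₀, hm₀, hm₀_free⟩ : ∃ m₀ ∈ S, ∀ m ∈ freeCoords B v, m = m₀ := by
    rcases (freeCoords B v).eq_empty_or_nonempty with h | ⟨m₀, hm₀⟩
    · obtain ⟨m₀, hm₀⟩ := card_pos.mp (by omega : 0 < S.card)
      exact ⟨m₀, hm₀, by simp [h]⟩
    · refine ⟨m₀, ?_, fun m hm => card_le_one.mp hfree m hm m₀ hm₀⟩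
      simpa [S, ← abs_pos] using (mem_freeCoords.mp hm₀).1
  have hpos : 0 < |v m₀| := abs_pos.mpr (mem_filter.mp hm₀).2
  have hsat : ∀ m ∈ S.erase m₀, |v m| = B := by
    intro m hm
    obtain ⟨hne, hmS⟩ := mem_erase.mp hm
    refine (hv m).eq_of_not_lt fun hlt => hne (hm₀_free m (mem_freeCoords.mpr ⟨?_, hlt⟩))
    exact abs_pos.mpr (mem_filter.mp hmS).2
  have hcard : (k : ℝ) ≤ (S.erase m₀).card := by
    rw [card_erase_of_mem hm₀]; exact_mod_cast Nat.le_sub_one_of_lt hS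
  have : k * B < l1 v := calc
    (k : ℝ) * B ≤ (S.erase m₀).card * B := by gcongr; exact hpos.le.trans (hv m₀)
    _ < |v m₀| + ∑ m ∈ S.erase m₀, |v m| := by
      rw [sum_congr rfl hsat, sum_const, nsmul_eq_mul]; linarith
    _ = ∑ m ∈ S, |v m| := add_sum_erase S (fun m => |v m|) hm₀
    _ ≤ l1 v := sum_le_sum_of_subset_of_nonneg (subset_univ S) fun _ _ _ => abs_nonneg _
  linarith

noncomputable def massShift (v : Fin n → ℝ) (i j : Fin n) : Fin n → ℝ :=
  Pi.single i (SignType.sign (v i) : ℝ) - Pi.single j (SignType.sign (v j) : ℝ)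

theorem massShift_swap (v : Fin n → ℝ) (i j : Fin n) : massShift v j i = -massShift v i j := by
  simp [massShift]

variable {v : Fin n → ℝ} {i j : Fin n}

theorem add_smul_massShift_apply_of_ne (t : ℝ) {m : Fin n} (hmi : m ≠ i) (hmj : m ≠ j) :
    (v + t • massShift v i j) m = v m := by
  simp [massShift, hmi, hmj]

theorem abs_add_smul_massShift_apply_left (t : ℝ) (hij : i ≠ j) (hi : v i ≠ 0)
    (ht : 0 ≤ |v i| + t) :
    |(v + t • massShift v i j) i| = |v i| + t := by
  simpa [massShift, hij] using abs_add_mul_sign hi ht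

theorem abs_add_smul_massShift_apply_right (t : ℝ) (hij : i ≠ j) (hj : v j ≠ 0)
    (ht : t ≤ |v j|) :
    |(v + t • massShift v i j) j| = |v j| - t := by
  simpa [massShift, hij.symm, sub_eq_add_neg] using abs_add_mul_sign hj (t := -t) (by linarith)

theorem l1_add_smul_massShift (t : ℝ) (hij : i ≠ j) (hi : v i ≠ 0) (hj : v j ≠ 0)
    (ht₁ : 0 ≤ |v i| + t) (ht₂ : t ≤ |v j|) : l1 (v + t • massShift v i j) = l1 v := by
  unfold l1
  rw [← sub_eq_zero, ← sum_sub_distrib, Fintype.sum_eq_add i j hij]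
  · rw [abs_add_smul_massShift_apply_left t hij hi ht₁,
      abs_add_smul_massShift_apply_right t hij hj ht₂]
    ring
  · rintro m ⟨hmi, hmj⟩
    rw [add_smul_massShift_apply_of_ne t hmi hmj, sub_self]

variable {B : ℝ}

theorem freeCoords_add_smul_massShift_subset (t : ℝ) (hi : i ∈ freeCoords B v)
    (hj : j ∈ freeCoords B v) :
    freeCoords B (v + t • massShift v i j) ⊆ freeCoords B v := by
  intro m hm
  by_cases hmi : m = i
  · exact hmi ▸ hi
  by_cases hmj : m = j
  · exact hmj ▸ hj
  rwa [mem_freeCoords, add_smul_massShift_apply_of_ne t hmi hmj, ← mem_freeCoords] at hm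

theorem exists_massShift_of_mem_freeCoords (hv : ∀ m, |v m| ≤ B) (hi : i ∈ freeCoords B v)
    (hj : j ∈ freeCoords B v) (hij : i ≠ j) :
    ∃ t : ℝ, 0 < t ∧ l1 (v + t • massShift v i j) = l1 v ∧
      (∀ m, |(v + t • massShift v i j) m| ≤ B) ∧
      freeCoords B (v + t • massShift v i j) ⊂ freeCoords B v := by
  obtain ⟨hi₀, hiB⟩ := mem_freeCoords.mp hi
  obtain ⟨hj₀, hjB⟩ := mem_freeCoords.mp hj
  -- move as much mass as possible: until coordinate `j` empties or coordinate `i` saturates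
  set t := min |v j| (B - |v i|) with ht_def
  have htj : t ≤ |v j| := min_le_left _ _
  have hti : t ≤ B - |v i| := min_le_right _ _
  have ht : 0 < t := lt_min hj₀ (by linarith)
  have hui := abs_add_smul_massShift_apply_left t hij (abs_pos.mp hi₀) (by linarith)
  have huj := abs_add_smul_massShift_apply_right t hij (abs_pos.mp hj₀) htj
  refine ⟨t, ht, l1_add_smul_massShift t hij (abs_pos.mp hi₀) (abs_pos.mp hj₀) (by linarith) htj,
    fun m => ?_, (ssubset_iff_of_subset (freeCoords_add_smul_massShift_subset t hi hj)).mpr ?_⟩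
  · by_cases hmi : m = i
    · rw [hmi, hui]; linarith
    by_cases hmj : m = j
    · rw [hmj, huj]; linarith
    rw [add_smul_massShift_apply_of_ne t hmi hmj]; exact hv m
  · rcases min_choice |v j| (B - |v i|) with h | h <;> rw [← ht_def] at h
    · exact ⟨j, hj, fun hm => by rw [mem_freeCoords, huj] at hm; linarith [hm.1]⟩
    · exact ⟨i, hi, fun hm => by rw [mem_freeCoords, hui] at hm; linarith [hm.2]⟩

def sparseAtoms (k : ℕ) (B L : ℝ) : Set (Fin n → ℝ) :=
  {w | Sparse k w ∧ l1 w = L ∧ ∀ m, |w m| ≤ B}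

theorem mem_convexHull_sparseAtoms {k : ℕ} (v : Fin n → ℝ) (hv : ∀ m, |v m| ≤ B)
    (hl1 : l1 v ≤ k * B) : v ∈ convexHull ℝ (sparseAtoms k B (l1 v)) := by
  by_cases hsparse : Sparse k v
  · exact subset_convexHull ℝ _ ⟨hsparse, rfl, hv⟩
  obtain ⟨i, hi, j, hj, hij⟩ := one_lt_card.mp (one_lt_card_freeCoords hv hl1 hsparse)
  obtain ⟨s, hs, hl1₁, hv₁, hfree₁⟩ := exists_massShift_of_mem_freeCoords hv hi hj hij
  obtain ⟨t, ht, hl1₂, hv₂, hfree₂⟩ := exists_massShift_of_mem_freeCoords hv hj hi hij.symm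
  have h₁ := mem_convexHull_sparseAtoms _ hv₁ (hl1₁ ▸ hl1)
  have h₂ := mem_convexHull_sparseAtoms _ hv₂ (hl1₂ ▸ hl1)
  rw [hl1₁] at h₁
  rw [hl1₂] at h₂
  have hseg := mem_segment_add_smul_sub_smul v (massShift v i j) hs ht
  rw [sub_eq_add_neg, ← smul_neg, ← massShift_swap] at hseg
  exact (convex_convexHull ℝ _).segment_subset h₁ h₂ hseg
termination_by (freeCoords B v).card
decreasing_by
  · exact card_lt_card hfree₁
  · exact card_lt_card hfree₂

end

theorem sparse_convex_decomposition_general {n k : ℕ} (hk : 0 < k) (C : ℝ)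
    (v : Fin n → ℝ) (hv1 : l1 v ≤ C) (hvinf : ∀ i, |v i| ≤ C / k) :
    ∃ (M : ℕ) (x : Fin M → ℝ) (w : Fin M → (Fin n → ℝ)),
      (∀ t, 0 ≤ x t) ∧ (∑ t, x t = 1) ∧
      (∀ t, Sparse k (w t)) ∧
      (∀ t, l1 (w t) = l1 v) ∧
      (∀ t, ∀ i, |w t i| ≤ C / k) ∧
      v = ∑ t, x t • w t := by
  have hl1 : l1 v ≤ k * (C / k) := by rwa [mul_div_cancel₀ C (by positivity)]
  obtain ⟨M, x, w, hx₀, hx₁, hw, hv⟩ :=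
    exists_fin_of_mem_convexHull (mem_convexHull_sparseAtoms v hvinf hl1)
  exact ⟨M, x, w, hx₀, hx₁, fun t => (hw t).1, fun t => (hw t).2.1, fun t => (hw t).2.2, hv.symm⟩

theorem sparse_convex_decomposition {n k : ℕ} (hk : 0 < k) (hkn : k ≤ n) (C : ℝ)
    (hC : 0 < C) (v : Fin n → ℝ) (hv1 : l1 v ≤ C) (hvinf : ∀ i, |v i| ≤ C / k) :
    ∃ (M : ℕ) (x : Fin M → ℝ) (w : Fin M → (Fin n → ℝ)),
      (∀ t, 0 ≤ x t) ∧ (∑ t, x t = 1) ∧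
      (∀ t, Sparse k (w t)) ∧
      (∀ t, l1 (w t) = l1 v) ∧
      (∀ t, ∀ i, |w t i| ≤ C / k) ∧
      v = ∑ t, x t • w t :=
  sparse_convex_decomposition_general hk C v hv1 hvinf
end

section
/- Let D ∈ ℝ^{p×d} be a tight frame with DD* = I and let Φ ∈ ℝ^{n×p} satisfy the D-RIP with constant δ_{2k} < 2/3. Let β ∈ ℝ^p, y = Φβ + z with ‖z‖₂ ≤ ε, and let β̂ = argmin_{γ} ‖D*γ‖₁ subject to ‖y − Φγ‖₂ ≤ ε. Then ‖β − β̂‖₂ ≤ C₀ ε + C₁ ‖D*β − (D*β)_{max(k)}‖₁ / √k, where C₀ and C₁ are explicit constants depending only on δ_{2k} (e.g. C₀ = 8√(1+δ)/(3(2/3−δ)) and C₁ = 2 + 2(4δ + √(6δ(2/3−δ)))/(3(2/3−δ)) with δ = δ_{2k}). -/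
/-!
Put `h = β - βhat` and `a = Dᵀ h`, so that `D a = h` and `‖a‖₂ = ‖h‖₂`. Feasibility of `β` and
`βhat` gives `‖Φ h‖₂ ≤ 2ε`, and minimality of `βhat` gives the cone condition
`‖a_{Tᶜ}‖₁ ≤ ‖a_T‖₁ + 2‖(Dᵀβ)_{Ωᶜ}‖₁` for the set `T` of the `k` largest entries of `a`. The tail
`a_{Tᶜ}` then has entries at most `α = (‖a_T‖₁ + 2‖(Dᵀβ)_{Ωᶜ}‖₁) / k` and `ℓ¹`-norm at most `kα`,
so (Cai–Zhang) it is a convex combination `∑ wᵢ uᵢ` of `k`-sparse vectors with entries at most `α`.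
The D-RIP applied to the `2k`-sparse vectors `a_T + uᵢ / 2` and averaged over `i` gives a quadratic
inequality for `‖a_T‖₂`, and the tail satisfies `‖a_{Tᶜ}‖₂² ≤ ‖a_{Tᶜ}‖_∞ ‖a_{Tᶜ}‖₁`.
-/

open scoped Classical BigOperators

open Matrix

lemma l2_nonneg {n : ℕ} (v : Fin n → ℝ) : 0 ≤ l2 v := Real.sqrt_nonneg _

lemma l1_nonneg {n : ℕ} (v : Fin n → ℝ) : 0 ≤ l1 v := by
  unfold l1; positivity

lemma l2_sq {n : ℕ} (v : Fin n → ℝ) : l2 v ^ 2 = ∑ i, v i ^ 2 :=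
  Real.sq_sqrt (by positivity)

lemma dotProduct_self_eq_l2_sq {n : ℕ} (v : Fin n → ℝ) : v ⬝ᵥ v = l2 v ^ 2 := by
  rw [l2_sq]; simp only [dotProduct, sq]

lemma dotProduct_le_l2_mul_l2 {n : ℕ} (v w : Fin n → ℝ) : v ⬝ᵥ w ≤ l2 v * l2 w :=
  Real.sum_mul_le_sqrt_mul_sqrt _ v w

lemma l2_eq_norm {n : ℕ} (v : Fin n → ℝ) : l2 v = ‖WithLp.toLp 2 v‖ := by
  simp [l2, EuclideanSpace.norm_eq]

lemma l2_sub_le {n : ℕ} (v w : Fin n → ℝ) : l2 (v - w) ≤ l2 v + l2 w := by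
  simpa only [l2_eq_norm, WithLp.toLp_sub] using norm_sub_le _ _

lemma l2_mulVec_sub_le {n p : ℕ} {Φ : Matrix (Fin n) (Fin p) ℝ} {β γ : Fin p → ℝ}
    {y z : Fin n → ℝ} {ε : ℝ} (hy : y = Φ *ᵥ β + z) (hz : l2 z ≤ ε) (hγ : l2 (y - Φ *ᵥ γ) ≤ ε) :
    l2 (Φ *ᵥ (β - γ)) ≤ 2 * ε := by
  have : Φ *ᵥ (β - γ) = (y - Φ *ᵥ γ) - z := by rw [hy, mulVec_sub]; abel
  rw [this]
  linarith [l2_sub_le (y - Φ *ᵥ γ) z]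

section TightFrame

variable {p d : ℕ} {D : Matrix (Fin p) (Fin d) ℝ}

lemma mulVec_dotProduct_eq_dotProduct_transpose_mulVec (x : Fin d → ℝ) (w : Fin p → ℝ) :
    (D *ᵥ x) ⬝ᵥ w = x ⬝ᵥ (Dᵀ *ᵥ w) := by
  rw [← vecMul_transpose, ← dotProduct_mulVec]

variable (hD : D * Dᵀ = 1)
include hD

lemma mulVec_transpose_mulVec_of_tightFrame (x : Fin p → ℝ) : D *ᵥ (Dᵀ *ᵥ x) = x := by
  rw [mulVec_mulVec, hD, one_mulVec]

lemma l2_transpose_mulVec_of_tightFrame (x : Fin p → ℝ) : l2 (Dᵀ *ᵥ x) = l2 x := by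
  have h : l2 (Dᵀ *ᵥ x) ^ 2 = l2 x ^ 2 := by
    rw [← dotProduct_self_eq_l2_sq, ← mulVec_dotProduct_eq_dotProduct_transpose_mulVec,
      mulVec_transpose_mulVec_of_tightFrame hD, dotProduct_self_eq_l2_sq]
  exact (pow_left_inj₀ (l2_nonneg _) (l2_nonneg _) two_ne_zero).1 h

lemma l2_mulVec_le_of_tightFrame (v : Fin d → ℝ) : l2 (D *ᵥ v) ≤ l2 v := by
  have h : l2 (D *ᵥ v) ^ 2 ≤ l2 v * l2 (D *ᵥ v) := by
    rw [← dotProduct_self_eq_l2_sq, mulVec_dotProduct_eq_dotProduct_transpose_mulVec]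
    calc v ⬝ᵥ (Dᵀ *ᵥ (D *ᵥ v)) ≤ l2 v * l2 (Dᵀ *ᵥ (D *ᵥ v)) := dotProduct_le_l2_mul_l2 _ _
      _ = l2 v * l2 (D *ᵥ v) := by rw [l2_transpose_mulVec_of_tightFrame hD]
  nlinarith [l2_nonneg (D *ᵥ v), l2_nonneg v]

end TightFrame

section Sparsity

variable {m : ℕ}

lemma Sparse.mono {k k' : ℕ} {v : Fin m → ℝ} (hv : Sparse k v) (h : k ≤ k') : Sparse k' v :=
  hv.trans h

lemma sparse_restrict (S : Finset (Fin m)) (v : Fin m → ℝ) : Sparse S.card (restrict S v) := by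
  refine Finset.card_le_card fun i hi => ?_
  by_contra hiS
  simp [restrict, hiS] at hi

lemma Sparse.add_smul {k k' : ℕ} {u w : Fin m → ℝ} (hu : Sparse k u) (hw : Sparse k' w) (c : ℝ) :
    Sparse (k + k') (u + c • w) := by
  refine le_trans (Finset.card_le_card fun i => ?_) ((Finset.card_union_le _ _).trans
    (add_le_add hu hw))
  simp only [Finset.mem_filter, Finset.mem_univ, true_and, Finset.mem_union]
  contrapose!
  simp +contextual

lemma Sparse.l1_le {k : ℕ} {v : Fin m → ℝ} (hv : Sparse k v) : l1 v ≤ √k * l2 v := by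
  set S := Finset.univ.filter fun i => v i ≠ 0
  have hS : l1 v = ∑ i ∈ S, |v i| * 1 := by
    simp only [mul_one, l1, S]
    exact (Finset.sum_filter_of_ne fun i _ h => by simpa using h).symm
  calc l1 v ≤ √(∑ i ∈ S, |v i| ^ 2) * √(∑ i ∈ S, (1 : ℝ) ^ 2) := by
        rw [hS]; exact Real.sum_mul_le_sqrt_mul_sqrt _ _ _
    _ ≤ l2 v * √k := by
        simp only [sq_abs, one_pow, Finset.sum_const, nsmul_one]
        gcongr
        · exact l2_nonneg v
        · exact Real.sqrt_le_sqrt (Finset.sum_le_sum_of_subset_of_nonneg (Finset.subset_univ _)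
            fun _ _ _ => sq_nonneg _)
        · exact hv
    _ = √k * l2 v := mul_comm _ _

lemma Sparse.l2_sq_le {k : ℕ} {v : Fin m → ℝ} (hv : Sparse k v) {α : ℝ} (hα : ∀ j, |v j| ≤ α) :
    l2 v ^ 2 ≤ k * α ^ 2 := by
  set S := Finset.univ.filter fun i => v i ≠ 0
  calc l2 v ^ 2 = ∑ i ∈ S, v i ^ 2 := by
        rw [l2_sq]; exact (Finset.sum_filter_of_ne fun i _ h => by simpa using h).symm
    _ ≤ ∑ _i ∈ S, α ^ 2 := Finset.sum_le_sum fun i _ => by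
        rw [← sq_abs]; exact pow_le_pow_left₀ (abs_nonneg _) (hα i) 2
    _ ≤ k * α ^ 2 := by
        rw [Finset.sum_const, nsmul_eq_mul]
        exact mul_le_mul_of_nonneg_right (by exact_mod_cast hv) (sq_nonneg _)

end Sparsity

section Restriction

variable {m : ℕ}

lemma restrict_add_restrict_compl (S : Finset (Fin m)) (v : Fin m → ℝ) :
    restrict S v + restrict Sᶜ v = v := by
  funext i
  by_cases h : i ∈ S <;> simp [restrict, h]

lemma l1_restrict (S : Finset (Fin m)) (v : Fin m → ℝ) :
    l1 (restrict S v) = ∑ i ∈ S, |v i| := by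
  simp [l1, restrict, apply_ite, Finset.sum_ite_mem]

lemma l2_sq_restrict (S : Finset (Fin m)) (v : Fin m → ℝ) :
    l2 (restrict S v) ^ 2 = ∑ i ∈ S, v i ^ 2 := by
  simp [l2_sq, restrict, Finset.sum_ite_mem]

lemma l2_sq_eq_l2_sq_restrict_add (S : Finset (Fin m)) (v : Fin m → ℝ) :
    l2 v ^ 2 = l2 (restrict S v) ^ 2 + l2 (restrict Sᶜ v) ^ 2 := by
  rw [l2_sq_restrict, l2_sq_restrict, Finset.sum_add_sum_compl, l2_sq]

lemma restrict_dotProduct_self (S : Finset (Fin m)) (v : Fin m → ℝ) :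
    restrict S v ⬝ᵥ v = l2 (restrict S v) ^ 2 := by
  rw [l2_sq_restrict]
  simp [dotProduct, restrict, ite_mul, Finset.sum_ite_mem, sq]

end Restriction

section LargestEntries

variable {m k : ℕ} {a : Fin m → ℝ} {T : Finset (Fin m)}

lemma exists_isLargestK (a : Fin m → ℝ) (hk : k ≤ m) : ∃ T, IsLargestK k a T := by
  induction k with
  | zero => exact ⟨∅, by simp [IsLargestK]⟩
  | succ k ih =>
    obtain ⟨T, hcard, hT⟩ := ih (by omega)
    have hne : Tᶜ.Nonempty := by
      rw [← Finset.card_pos, Finset.card_compl, Fintype.card_fin, hcard]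
      omega
    obtain ⟨i, hi, hmax⟩ := Tᶜ.exists_max_image (fun j => |a j|) hne
    refine ⟨insert i T, by rw [Finset.card_insert_of_notMem (by simpa using hi), hcard], ?_⟩
    intro i' hi' j hj
    rw [Finset.mem_insert, not_or] at hj
    rcases Finset.mem_insert.mp hi' with rfl | hi'T
    · exact hmax j (by simpa using hj.2)
    · exact hT i' hi'T j hj.2

lemma IsLargestK.card_mul_abs_le (hT : IsLargestK k a T)
    {j : Fin m} (hj : j ∉ T) : k * |a j| ≤ ∑ i ∈ T, |a i| := by
  simpa [hT.1] using Finset.card_nsmul_le_sum T (fun i => |a i|) _ fun i hi => hT.2 i hi j hj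

lemma IsLargestK.sum_abs_le {Ω : Finset (Fin m)} (hT : IsLargestK k a T)
    (hΩ : Ω.card = k) : ∑ i ∈ Ω, |a i| ≤ ∑ i ∈ T, |a i| := by
  rw [← Finset.sum_inter_add_sum_sdiff Ω T, ← Finset.sum_inter_add_sum_sdiff T Ω,
    Finset.inter_comm Ω T]
  have hcard : (Ω \ T).card = (T \ Ω).card := Finset.card_sdiff_comm (hΩ.trans hT.1.symm)
  rcases (T \ Ω).eq_empty_or_nonempty with hempty | hne
  · rw [hempty, Finset.card_empty, Finset.card_eq_zero] at hcard
    simp [hempty, hcard]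
  obtain ⟨i₀, hi₀, hmin⟩ := (T \ Ω).exists_min_image (fun j => |a j|) hne
  refine add_le_add le_rfl ?_
  calc ∑ j ∈ Ω \ T, |a j| ≤ (Ω \ T).card • |a i₀| :=
        Finset.sum_le_card_nsmul _ _ _ fun j hj =>
          hT.2 i₀ (Finset.mem_sdiff.mp hi₀).1 j (Finset.mem_sdiff.mp hj).2
    _ = (T \ Ω).card • |a i₀| := by rw [hcard]
    _ ≤ ∑ i ∈ T \ Ω, |a i| := Finset.card_nsmul_le_sum _ _ _ hmin

lemma IsLargestK.sum_abs_le_sqrt_mul_l2 (hT : IsLargestK k a T) :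
    ∑ i ∈ T, |a i| ≤ √k * l2 (restrict T a) := by
  rw [← l1_restrict]
  exact (hT.1 ▸ sparse_restrict T a).l1_le

lemma IsLargestK.abs_le_of_notMem (hT : IsLargestK k a T) (hk : 0 < k) {j : Fin m} (hj : j ∉ T) :
    |a j| ≤ (∑ i ∈ T, |a i|) / k := by
  rw [le_div_iff₀ (by exact_mod_cast hk), mul_comm]
  exact hT.card_mul_abs_le hj

lemma IsLargestK.l2_sq_restrict_compl_le (hT : IsLargestK k a T) (hk : 0 < k) {e : ℝ}
    (hcone : ∑ i ∈ Tᶜ, |a i| ≤ ∑ i ∈ T, |a i| + 2 * e) :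
    l2 (restrict Tᶜ a) ^ 2 ≤ l2 (restrict T a) ^ 2 + 2 * l2 (restrict T a) * (e / √k) := by
  set S := ∑ i ∈ T, |a i|
  set A := l2 (restrict T a)
  have hk' : (0 : ℝ) < √k := Real.sqrt_pos.mpr (by exact_mod_cast hk)
  have hS : S ≤ √k * A := hT.sum_abs_le_sqrt_mul_l2
  have hS₀ : 0 ≤ S := Finset.sum_nonneg fun _ _ => abs_nonneg _
  calc l2 (restrict Tᶜ a) ^ 2 = ∑ j ∈ Tᶜ, |a j| * |a j| := by
        rw [l2_sq_restrict]; simp only [← sq, sq_abs]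
    _ ≤ ∑ j ∈ Tᶜ, S / k * |a j| := Finset.sum_le_sum fun j hj =>
        mul_le_mul_of_nonneg_right (hT.abs_le_of_notMem hk (Finset.mem_compl.mp hj)) (abs_nonneg _)
    _ = S / √k ^ 2 * ∑ j ∈ Tᶜ, |a j| := by
        rw [← Finset.mul_sum, Real.sq_sqrt (Nat.cast_nonneg k)]
    _ ≤ (√k * A) / √k ^ 2 * (√k * A + 2 * e) :=
        mul_le_mul (div_le_div_of_nonneg_right hS (sq_nonneg _)) (by linarith)
          (Finset.sum_nonneg fun _ _ => abs_nonneg _)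
          (div_nonneg (mul_nonneg hk'.le (l2_nonneg _)) (sq_nonneg _))
    _ = A ^ 2 + 2 * A * (e / √k) := by field_simp

end LargestEntries

section Cone

variable {m : ℕ}

lemma sum_abs_compl_le_of_l1_sub_le {a b : Fin m → ℝ} (h : l1 (b - a) ≤ l1 b)
    (S : Finset (Fin m)) :
    ∑ i ∈ Sᶜ, |a i| ≤ ∑ i ∈ S, |a i| + 2 * ∑ i ∈ Sᶜ, |b i| := by
  have hS : ∑ i ∈ S, (|b i| - |a i|) ≤ ∑ i ∈ S, |(b - a) i| :=
    Finset.sum_le_sum fun i _ => abs_sub_abs_le_abs_sub _ _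
  have hSc : ∑ i ∈ Sᶜ, (|a i| - |b i|) ≤ ∑ i ∈ Sᶜ, |(b - a) i| :=
    Finset.sum_le_sum fun i _ => (abs_sub_abs_le_abs_sub _ _).trans_eq (abs_sub_comm _ _)
  rw [l1, l1, ← Finset.sum_add_sum_compl S, ← Finset.sum_add_sum_compl S (fun i => |b i|)] at h
  simp only [Finset.sum_sub_distrib] at hS hSc
  linarith

lemma IsLargestK.sum_abs_compl_le {k : ℕ} {a : Fin m → ℝ} {T Ω : Finset (Fin m)}
    (hT : IsLargestK k a T) (hΩ : Ω.card = k) {e : ℝ}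
    (hcone : ∑ i ∈ Ωᶜ, |a i| ≤ ∑ i ∈ Ω, |a i| + e) :
    ∑ i ∈ Tᶜ, |a i| ≤ ∑ i ∈ T, |a i| + e := by
  have hΩT := hT.sum_abs_le hΩ
  have hT' := Finset.sum_add_sum_compl T (fun i => |a i|)
  have hΩ' := Finset.sum_add_sum_compl Ω (fun i => |a i|)
  linarith

end Cone

section SparsePolytope

variable {m : ℕ}

noncomputable def fractionalSupport (α : ℝ) (v : Fin m → ℝ) : Finset (Fin m) :=
  Finset.univ.filter fun j => 0 < |v j| ∧ |v j| < α

noncomputable def moveMass (v : Fin m → ℝ) (j₁ j₂ : Fin m) (t : ℝ) : Fin m → ℝ :=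
  v + t • (Pi.single j₁ (SignType.sign (v j₁) : ℝ) - Pi.single j₂ (SignType.sign (v j₂) : ℝ))

lemma moveMass_swap (v : Fin m → ℝ) (j₁ j₂ : Fin m) (t : ℝ) :
    moveMass v j₂ j₁ t = moveMass v j₁ j₂ (-t) := by
  simp only [moveMass, neg_smul, ← smul_neg, neg_sub]

lemma abs_add_mul_sign_s12 {r c : ℝ} (hr : r ≠ 0) (hc : -|r| ≤ c) :
    |r + c * SignType.sign r| = |r| + c := by
  have : r + c * SignType.sign r = SignType.sign r * (|r| + c) := by
    nth_rewrite 1 [← sign_mul_abs r]; ring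
  have hsign : |(SignType.sign r : ℝ)| = 1 := by
    rcases hr.lt_or_gt with h | h <;> simp [sign_neg, sign_pos, h]
  rw [this, abs_mul, abs_of_nonneg (by linarith : 0 ≤ |r| + c), hsign, one_mul]

variable {v : Fin m → ℝ} {j₁ j₂ : Fin m} {t α : ℝ}

lemma abs_moveMass_apply (hne : j₁ ≠ j₂) (h₁ : v j₁ ≠ 0) (h₂ : v j₂ ≠ 0) (ht₁ : -|v j₁| ≤ t)
    (ht₂ : t ≤ |v j₂|) (j : Fin m) :
    |moveMass v j₁ j₂ t j| = |v j| + (Pi.single j₁ t - Pi.single j₂ t : Fin m → ℝ) j := by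
  by_cases hj₁ : j = j₁
  · subst hj₁
    simp [moveMass, hne, abs_add_mul_sign_s12 h₁ ht₁]
  by_cases hj₂ : j = j₂
  · subst hj₂
    simpa [moveMass, hj₁, sub_eq_add_neg] using abs_add_mul_sign_s12 h₂ (c := -t) (by linarith)
  · simp [moveMass, hj₁, hj₂]

lemma l1_moveMass (hne : j₁ ≠ j₂) (h₁ : v j₁ ≠ 0) (h₂ : v j₂ ≠ 0) (ht₁ : -|v j₁| ≤ t)
    (ht₂ : t ≤ |v j₂|) : l1 (moveMass v j₁ j₂ t) = l1 v := by
  simp only [l1, abs_moveMass_apply hne h₁ h₂ ht₁ ht₂, Finset.sum_add_distrib, Pi.sub_apply,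
    Finset.sum_sub_distrib, Finset.sum_pi_single', Finset.mem_univ, if_true, sub_self, add_zero]

lemma mem_fractionalSupport {j : Fin m} :
    j ∈ fractionalSupport α v ↔ 0 < |v j| ∧ |v j| < α := by
  simp only [fractionalSupport, Finset.mem_filter, Finset.mem_univ, true_and]

lemma exists_moveMass (hv : ∀ j, |v j| ≤ α) (hne : j₁ ≠ j₂) (h₁ : j₁ ∈ fractionalSupport α v)
    (h₂ : j₂ ∈ fractionalSupport α v) :
    ∃ t > 0, -|v j₁| ≤ t ∧ t ≤ |v j₂| ∧ (∀ j, |moveMass v j₁ j₂ t j| ≤ α) ∧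
      fractionalSupport α (moveMass v j₁ j₂ t) ⊂ fractionalSupport α v := by
  rw [mem_fractionalSupport] at h₁ h₂
  set t := min |v j₂| (α - |v j₁|)
  have ht₀ : 0 < t := lt_min h₂.1 (by linarith)
  have ht₁ : -|v j₁| ≤ t := by linarith [abs_nonneg (v j₁)]
  have ht₂ : t ≤ |v j₂| := min_le_left _ _
  have habs := abs_moveMass_apply hne (abs_pos.mp h₁.1) (abs_pos.mp h₂.1) ht₁ ht₂
  have hleft : |moveMass v j₁ j₂ t j₁| = |v j₁| + t := by simp [habs, hne]
  have hright : |moveMass v j₁ j₂ t j₂| = |v j₂| - t := by simp [habs, hne.symm, sub_eq_add_neg]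
  have hother : ∀ j, j ≠ j₁ → j ≠ j₂ → |moveMass v j₁ j₂ t j| = |v j| := fun j hj₁ hj₂ => by
    simp [habs, hj₁, hj₂]
  refine ⟨t, ht₀, ht₁, ht₂, fun j => ?_, ?_⟩
  · by_cases hj₁ : j = j₁
    · rw [hj₁, hleft]; linarith [min_le_right |v j₂| (α - |v j₁|)]
    by_cases hj₂ : j = j₂
    · rw [hj₂, hright]; linarith [hv j₂]
    · rw [hother j hj₁ hj₂]; exact hv j
  rw [Finset.ssubset_iff_of_subset]
  · rcases min_choice |v j₂| (α - |v j₁|) with ht | ht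
    · refine ⟨j₂, mem_fractionalSupport.mpr h₂, fun h => ?_⟩
      rw [mem_fractionalSupport, hright] at h
      linarith [h.1]
    · refine ⟨j₁, mem_fractionalSupport.mpr h₁, fun h => ?_⟩
      rw [mem_fractionalSupport, hleft] at h
      linarith [h.2]
  intro j hj
  by_cases hj₁ : j = j₁
  · exact hj₁ ▸ mem_fractionalSupport.mpr h₁
  by_cases hj₂ : j = j₂
  · exact hj₂ ▸ mem_fractionalSupport.mpr h₂
  rwa [mem_fractionalSupport, hother j hj₁ hj₂, ← mem_fractionalSupport] at hj

lemma exists_pair_mem_fractionalSupport {s : ℕ} (hv : ∀ j, |v j| ≤ α) (hl1 : l1 v ≤ s * α)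
    (hs : ¬ Sparse s v) :
    ∃ j₁ j₂, j₁ ≠ j₂ ∧ j₁ ∈ fractionalSupport α v ∧ j₂ ∈ fractionalSupport α v := by
  set S := Finset.univ.filter fun i => v i ≠ 0
  have hS : s < S.card := not_le.mp hs
  obtain ⟨j₁, hj₁, hmin⟩ := S.exists_min_image (fun j => |v j|) (Finset.card_pos.mp (by omega))
  have hpos : ∀ j ∈ S, 0 < |v j| := fun j hj => abs_pos.mpr (Finset.mem_filter.mp hj).2
  obtain ⟨j₂, hj₂, hlt⟩ : ∃ j₂ ∈ S.erase j₁, |v j₂| < α := by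
    by_contra! hge
    have hα : 0 ≤ α := (abs_nonneg _).trans (hv j₁)
    have hcard : (s : ℝ) ≤ (S.erase j₁).card := by
      rw [Finset.card_erase_of_mem hj₁]; exact_mod_cast Nat.le_sub_one_of_lt hS
    have hsum : (S.erase j₁).card • α ≤ ∑ j ∈ S.erase j₁, |v j| :=
      Finset.card_nsmul_le_sum _ _ _ hge
    have hl1S : ∑ j ∈ S, |v j| ≤ l1 v :=
      Finset.sum_le_sum_of_subset_of_nonneg (Finset.subset_univ _) fun _ _ _ => abs_nonneg _
    rw [← Finset.add_sum_erase S _ hj₁, nsmul_eq_mul] at *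
    nlinarith [hpos j₁ hj₁]
  have hj₂S := Finset.mem_of_mem_erase hj₂
  refine ⟨j₁, j₂, (Finset.ne_of_mem_erase hj₂).symm, ?_, ?_⟩ <;> rw [mem_fractionalSupport]
  · exact ⟨hpos j₁ hj₁, (hmin j₂ hj₂S).trans_lt hlt⟩
  · exact ⟨hpos j₂ hj₂S, hlt⟩

/-- Two coordinates with `0 < |v j| < α` can trade absolute mass in either direction until one of
them reaches `0` or `α`; `v` lies on the segment between the two results, which have fewer such
coordinates. -/
theorem mem_convexHull_sparse {s : ℕ} (hv : ∀ j, |v j| ≤ α) (hl1 : l1 v ≤ s * α) :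
    v ∈ convexHull ℝ {u | Sparse s u ∧ ∀ j, |u j| ≤ α} := by
  induction hN : (fractionalSupport α v).card using Nat.strong_induction_on generalizing v with
  | _ N ih =>
  by_cases hs : Sparse s v
  · exact subset_convexHull ℝ _ ⟨hs, hv⟩
  obtain ⟨j₁, j₂, hne, h₁, h₂⟩ := exists_pair_mem_fractionalSupport hv hl1 hs
  have hv₁ : v j₁ ≠ 0 := abs_pos.mp (mem_fractionalSupport.mp h₁).1
  have hv₂ : v j₂ ≠ 0 := abs_pos.mp (mem_fractionalSupport.mp h₂).1
  obtain ⟨t₁, ht₁, hl₁, hu₁, hx, hxfrac⟩ := exists_moveMass hv hne h₁ h₂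
  obtain ⟨t₂, ht₂, hl₂, hu₂, hy, hyfrac⟩ := exists_moveMass hv hne.symm h₂ h₁
  have hxmem := ih _ (hN ▸ Finset.card_lt_card hxfrac) hx
    ((l1_moveMass hne hv₁ hv₂ hl₁ hu₁).trans_le hl1) rfl
  have hymem := ih _ (hN ▸ Finset.card_lt_card hyfrac) hy
    ((l1_moveMass hne.symm hv₂ hv₁ hl₂ hu₂).trans_le hl1) rfl
  rw [moveMass_swap] at hymem
  have hcomb : (t₂ / (t₁ + t₂)) • moveMass v j₁ j₂ t₁ + (t₁ / (t₁ + t₂)) • moveMass v j₁ j₂ (-t₂)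
      = v := by
    unfold moveMass
    match_scalars <;> field_simp <;> ring
  rw [← hcomb]
  exact convex_convexHull ℝ _ hxmem hymem (by positivity) (by positivity)
    (by rw [← add_div, add_comm, div_self (by positivity)])

end SparsePolytope

section Tail

variable {m k : ℕ} {a : Fin m → ℝ} {T : Finset (Fin m)}

lemma IsLargestK.restrict_compl_mem_convexHull (hT : IsLargestK k a T) (hk : 0 < k) {e : ℝ}
    (he : 0 ≤ e) (hcone : ∑ i ∈ Tᶜ, |a i| ≤ ∑ i ∈ T, |a i| + 2 * e) :
    restrict Tᶜ a ∈ convexHull ℝ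
      {u | Sparse k u ∧ ∀ j, |u j| ≤ (∑ i ∈ T, |a i| + 2 * e) / k} := by
  have hk₀ : (0 : ℝ) < k := by exact_mod_cast hk
  refine mem_convexHull_sparse (fun j => ?_) ?_
  · by_cases hj : j ∈ T
    · simp only [restrict, Finset.mem_compl, hj, not_true_eq_false, if_false, abs_zero]
      exact div_nonneg (by positivity) hk₀.le
    · simp only [restrict, Finset.mem_compl, hj, not_false_eq_true, if_true]
      exact (hT.abs_le_of_notMem hk hj).trans (div_le_div_of_nonneg_right (by linarith) hk₀.le)
  · rwa [l1_restrict, mul_div_cancel₀ _ hk₀.ne']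

lemma IsLargestK.l2_sq_le_of_sparse (hT : IsLargestK k a T) (hk : 0 < k) {e : ℝ} (he : 0 ≤ e)
    {u : Fin m → ℝ} (hu : Sparse k u) (hbound : ∀ j, |u j| ≤ (∑ i ∈ T, |a i| + 2 * e) / k) :
    l2 u ^ 2 ≤ (l2 (restrict T a) + 2 * (e / √k)) ^ 2 := by
  have hk₀ : (0 : ℝ) < k := by exact_mod_cast hk
  have hk' : (0 : ℝ) < √k := Real.sqrt_pos.mpr hk₀
  have hkk : (k : ℝ) = √k ^ 2 := (Real.sq_sqrt hk₀.le).symm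
  have hsqrt : √k * ((∑ i ∈ T, |a i| + 2 * e) / k) = (∑ i ∈ T, |a i|) / √k + 2 * (e / √k) := by
    field_simp
    rw [← hkk]
    field_simp
  have hle : (∑ i ∈ T, |a i|) / √k ≤ l2 (restrict T a) := by
    rw [div_le_iff₀ hk', mul_comm]
    exact hT.sum_abs_le_sqrt_mul_l2
  calc l2 u ^ 2 ≤ k * ((∑ i ∈ T, |a i| + 2 * e) / k) ^ 2 := hu.l2_sq_le hbound
    _ = (√k * ((∑ i ∈ T, |a i| + 2 * e) / k)) ^ 2 := by rw [mul_pow, ← hkk]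
    _ ≤ (l2 (restrict T a) + 2 * (e / √k)) ^ 2 := by
        rw [hsqrt]
        gcongr

end Tail

lemma sum_mul_l2_sq_add_half_smul {q : ℕ} {ι : Type*} [Fintype ι] {w : ι → ℝ}
    (hw : ∑ i, w i = 1) (X : Fin q → ℝ) (Y : ι → Fin q → ℝ) :
    ∑ i, w i * l2 (X + (2⁻¹ : ℝ) • Y i) ^ 2
      = X ⬝ᵥ (X + ∑ i, w i • Y i) + 4⁻¹ * ∑ i, w i * l2 (Y i) ^ 2 := by
  simp only [← dotProduct_self_eq_l2_sq, add_dotProduct, dotProduct_add, smul_dotProduct,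
    dotProduct_smul, dotProduct_sum, smul_eq_mul, dotProduct_comm (Y _) X]
  simp only [mul_add, Finset.sum_add_distrib, ← Finset.sum_mul, hw, Finset.mul_sum]
  ring_nf
  rw [← Finset.sum_mul]
  ring

section DRIP

variable {n p d k : ℕ} {Φ : Matrix (Fin n) (Fin p) ℝ} {D : Matrix (Fin p) (Fin d) ℝ} {δ : ℝ}

lemma DRIP.l2_le (hRIP : DRIP Φ D k δ) {v : Fin d → ℝ} (hv : Sparse k v) :
    l2 (Φ *ᵥ (D *ᵥ v)) ≤ √(1 + δ) * l2 (D *ᵥ v) := by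
  rw [← Real.sqrt_sq (l2_nonneg (Φ *ᵥ _)), ← Real.sqrt_sq (l2_nonneg (D *ᵥ v)),
    ← Real.sqrt_mul' _ (sq_nonneg _)]
  exact Real.sqrt_le_sqrt (hRIP v hv).2

lemma DRIP.dotProduct_le (hD : D * Dᵀ = 1) (hRIP : DRIP Φ D k δ) {x : Fin d → ℝ}
    (hx : Sparse k x) (w : Fin n → ℝ) :
    (Φ *ᵥ (D *ᵥ x)) ⬝ᵥ w ≤ √(1 + δ) * l2 x * l2 w :=
  (dotProduct_le_l2_mul_l2 _ _).trans <| mul_le_mul_of_nonneg_right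
    ((hRIP.l2_le hx).trans <| mul_le_mul_of_nonneg_left (l2_mulVec_le_of_tightFrame hD x)
      (Real.sqrt_nonneg _)) (l2_nonneg w)

/-- Cai–Zhang's averaging step: the lower D-RIP bound is applied to the `2k`-sparse vectors
`x + uᵢ / 2`, and averaging over the convex combination `∑ wᵢ uᵢ` cancels the cross terms. -/
lemma DRIP.one_sub_mul_dotProduct_le {ι : Type*} [Fintype ι] (hRIP : DRIP Φ D (2 * k) δ)
    (hδ : 0 ≤ δ) {w : ι → ℝ} (hw₀ : ∀ i, 0 ≤ w i) (hw₁ : ∑ i, w i = 1) {x : Fin d → ℝ}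
    (hx : Sparse k x) {u : ι → Fin d → ℝ} (hu : ∀ i, Sparse k (u i)) {M : ℝ}
    (hM : ∀ i, l2 (D *ᵥ u i) ^ 2 ≤ M) :
    (1 - δ) * ((D *ᵥ x) ⬝ᵥ (D *ᵥ (x + ∑ i, w i • u i)))
      ≤ (Φ *ᵥ (D *ᵥ x)) ⬝ᵥ (Φ *ᵥ (D *ᵥ (x + ∑ i, w i • u i))) + δ / 2 * M := by
  have hD := sum_mul_l2_sq_add_half_smul hw₁ (D *ᵥ x) (fun i => D *ᵥ u i)
  have hΦD := sum_mul_l2_sq_add_half_smul hw₁ (Φ *ᵥ (D *ᵥ x)) (fun i => Φ *ᵥ (D *ᵥ u i))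
  simp only [← mulVec_smul, ← mulVec_add, ← mulVec_sum] at hD hΦD
  have hlower : (1 - δ) * ∑ i, w i * l2 (D *ᵥ (x + (2⁻¹ : ℝ) • u i)) ^ 2
      ≤ ∑ i, w i * l2 (Φ *ᵥ (D *ᵥ (x + (2⁻¹ : ℝ) • u i))) ^ 2 := by
    rw [Finset.mul_sum]
    refine Finset.sum_le_sum fun i _ => ?_
    have := (hRIP (x + (2⁻¹ : ℝ) • u i) (two_mul k ▸ hx.add_smul (hu i) _)).1
    nlinarith [hw₀ i]
  have hupper : ∑ i, w i * l2 (Φ *ᵥ (D *ᵥ u i)) ^ 2 ≤ (1 + δ) * ∑ i, w i * l2 (D *ᵥ u i) ^ 2 := by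
    rw [Finset.mul_sum]
    refine Finset.sum_le_sum fun i _ => ?_
    have := (hRIP _ ((hu i).mono (by omega))).2
    nlinarith [hw₀ i]
  have hW : ∑ i, w i * l2 (D *ᵥ u i) ^ 2 ≤ M := by
    calc ∑ i, w i * l2 (D *ᵥ u i) ^ 2 ≤ ∑ i, w i * M :=
          Finset.sum_le_sum fun i _ => mul_le_mul_of_nonneg_left (hM i) (hw₀ i)
      _ = M := by rw [← Finset.sum_mul, hw₁, one_mul]
  nlinarith

theorem DRIP.one_sub_mul_sq_l2_restrict_le (hD : D * Dᵀ = 1) (hRIP : DRIP Φ D (2 * k) δ)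
    (hδ : 0 ≤ δ) (hk : 0 < k) {h : Fin p → ℝ} {T : Finset (Fin d)}
    (hT : IsLargestK k (Dᵀ *ᵥ h) T) {e : ℝ} (he : 0 ≤ e)
    (hcone : ∑ i ∈ Tᶜ, |(Dᵀ *ᵥ h) i| ≤ ∑ i ∈ T, |(Dᵀ *ᵥ h) i| + 2 * e) :
    (1 - δ) * l2 (restrict T (Dᵀ *ᵥ h)) ^ 2
      ≤ (Φ *ᵥ (D *ᵥ restrict T (Dᵀ *ᵥ h))) ⬝ᵥ (Φ *ᵥ h)
        + δ / 2 * (l2 (restrict T (Dᵀ *ᵥ h)) + 2 * (e / √k)) ^ 2 := by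
  obtain ⟨ι, _, w, u, hw₀, hw₁, hu, hsum⟩ :=
    mem_convexHull_iff_exists_fintype.mp (hT.restrict_compl_mem_convexHull hk he hcone)
  have hM : ∀ i, l2 (D *ᵥ u i) ^ 2 ≤ (l2 (restrict T (Dᵀ *ᵥ h)) + 2 * (e / √k)) ^ 2 := fun i =>
    (pow_le_pow_left₀ (l2_nonneg _) (l2_mulVec_le_of_tightFrame hD _) 2).trans
      (hT.l2_sq_le_of_sparse hk he (hu i).1 (hu i).2)
  have key := hRIP.one_sub_mul_dotProduct_le hδ hw₀ hw₁ (hT.1 ▸ sparse_restrict T (Dᵀ *ᵥ h))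
    (fun i => (hu i).1) hM
  rwa [hsum, restrict_add_restrict_compl, mulVec_transpose_mulVec_of_tightFrame hD,
    mulVec_dotProduct_eq_dotProduct_transpose_mulVec, restrict_dotProduct_self] at key

end DRIP

lemma mul_le_add_sqrt_of_mul_sq_le {Q B C A : ℝ} (hQ : 0 ≤ Q) (hB : 0 ≤ B)
    (h : Q * A ^ 2 ≤ B * A + C) : Q * A ≤ B + √(Q * C) := by
  by_cases hAB : Q * A ≤ B
  · linarith [Real.sqrt_nonneg (Q * C)]
  have : (Q * A - B) ^ 2 ≤ Q * C := by nlinarith [mul_le_mul_of_nonneg_left h hQ]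
  linarith [(le_abs_self _).trans (Real.abs_le_sqrt this)]

lemma le_recovery_bound {δ ε η A L : ℝ} (hδ₀ : 0 ≤ δ) (hδ : δ < 2 / 3) (hε : 0 ≤ ε)
    (hη : 0 ≤ η) (hA : 0 ≤ A)
    (hquad : (1 - δ) * A ^ 2 ≤ √(1 + δ) * A * (2 * ε) + δ / 2 * (A + 2 * η) ^ 2)
    (hL : L ^ 2 ≤ 2 * A ^ 2 + 2 * A * η) :
    L ≤ (8 * √(1 + δ)) / (3 * (2 / 3 - δ)) * ε
      + (2 + 2 * (4 * δ + √(6 * δ * (2 / 3 - δ))) / (3 * (2 / 3 - δ))) * η := by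
  set Q := 3 * (2 / 3 - δ)
  have hQ : 0 < Q := by simp only [Q]; linarith
  have hr₀ : (0 : ℝ) ≤ √2 := Real.sqrt_nonneg 2
  have hr₂ : √2 ^ 2 = 2 := Real.sq_sqrt zero_le_two
  have hr : √2 ≤ 2 := by nlinarith
  have hr₁ : 1 ≤ √2 := by nlinarith
  have hL' : L ≤ √2 * A + η := (le_abs_self L).trans (abs_le_of_sq_le_sq
    (by nlinarith [mul_nonneg (sub_nonneg.mpr hr₁) (mul_nonneg hA hη)]) (by positivity))
  have hQA : Q * A ≤ (4 * √(1 + δ) * ε + 4 * δ * η) + √(Q * (4 * δ * η ^ 2)) :=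
    mul_le_add_sqrt_of_mul_sq_le hQ.le (by positivity) (by simp only [Q]; nlinarith)
  have hsqrt : √2 * √(Q * (4 * δ * η ^ 2)) = 2 * η * √(6 * δ * (2 / 3 - δ)) := by
    rw [← Real.sqrt_mul zero_le_two,
      show 2 * (Q * (4 * δ * η ^ 2)) = (2 * η) ^ 2 * (6 * δ * (2 / 3 - δ)) by simp only [Q]; ring,
      Real.sqrt_mul (sq_nonneg _), Real.sqrt_sq (by positivity)]
  rw [← mul_le_mul_iff_of_pos_left hQ]
  calc Q * L ≤ √2 * (Q * A) + Q * η := by nlinarith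
    _ ≤ √2 * (4 * √(1 + δ) * ε + 4 * δ * η) + 2 * η * √(6 * δ * (2 / 3 - δ)) + Q * η := by
        nlinarith [mul_le_mul_of_nonneg_left hQA hr₀]
    _ ≤ Q * ((8 * √(1 + δ)) / Q * ε + (2 + 2 * (4 * δ + √(6 * δ * (2 / 3 - δ))) / Q) * η) := by
        field_simp
        nlinarith [Real.sqrt_nonneg (6 * δ * (2 / 3 - δ)), mul_nonneg hδ₀ hη,
          mul_nonneg (Real.sqrt_nonneg (1 + δ)) hε]

theorem drip_recovery_general {n p d k : ℕ} (hk : 0 < k)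
    (Φ : Matrix (Fin n) (Fin p) ℝ) (D : Matrix (Fin p) (Fin d) ℝ)
    (hD : D * D.transpose = 1)
    (δ : ℝ) (hδ0 : 0 ≤ δ) (hδ : δ < 2 / 3) (hRIP : DRIP Φ D (2 * k) δ)
    (β βhat : Fin p → ℝ) (z y : Fin n → ℝ) (ε : ℝ)
    (hy : y = Φ.mulVec β + z) (hz : l2 z ≤ ε)
    (hfeas : l2 (y - Φ.mulVec βhat) ≤ ε)
    (hmin : ∀ γ : Fin p → ℝ, l2 (y - Φ.mulVec γ) ≤ ε →
      l1 (D.transpose.mulVec βhat) ≤ l1 (D.transpose.mulVec γ))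
    (Ω : Finset (Fin d)) (hΩ : IsLargestK k (D.transpose.mulVec β) Ω) :
    l2 (β - βhat) ≤ (8 * Real.sqrt (1 + δ)) / (3 * (2 / 3 - δ)) * ε
      + (2 + 2 * (4 * δ + Real.sqrt (6 * δ * (2 / 3 - δ))) / (3 * (2 / 3 - δ)))
        * (l1 (restrict Ωᶜ (D.transpose.mulVec β)) / Real.sqrt k) := by
  set h := β - βhat
  set a := Dᵀ *ᵥ h
  set e := l1 (restrict Ωᶜ (Dᵀ *ᵥ β))
  have htube : l2 (Φ *ᵥ h) ≤ 2 * ε := l2_mulVec_sub_le hy hz hfeas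
  have hcone : ∑ i ∈ Ωᶜ, |a i| ≤ ∑ i ∈ Ω, |a i| + 2 * e := by
    rw [show e = _ from l1_restrict Ωᶜ (Dᵀ *ᵥ β)]
    refine sum_abs_compl_le_of_l1_sub_le ?_ Ω
    rw [← mulVec_sub, sub_sub_cancel]
    exact hmin β (by rw [hy, add_sub_cancel_left]; exact hz)
  obtain ⟨T, hT⟩ :=
    exists_isLargestK a (hΩ.1 ▸ (Finset.card_le_univ Ω).trans_eq (Fintype.card_fin d))
  have hconeT := hT.sum_abs_compl_le hΩ.1 hcone
  have hTsparse : Sparse (2 * k) (restrict T a) := (hT.1 ▸ sparse_restrict T a).mono (by omega)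
  set A := l2 (restrict T a)
  have hquad := hRIP.one_sub_mul_sq_l2_restrict_le hD hδ0 hk hT (l1_nonneg _) hconeT
  have hcross := (hRIP.dotProduct_le hD hTsparse (Φ *ᵥ h)).trans
    (mul_le_mul_of_nonneg_left htube (mul_nonneg (Real.sqrt_nonneg _) (l2_nonneg _)))
  have hnorm : l2 h ^ 2 ≤ 2 * A ^ 2 + 2 * A * (e / √k) := by
    rw [← l2_transpose_mulVec_of_tightFrame hD h, l2_sq_eq_l2_sq_restrict_add T]
    linarith [hT.l2_sq_restrict_compl_le hk hconeT]
  exact le_recovery_bound hδ0 hδ ((l2_nonneg z).trans hz)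
    (div_nonneg (l1_nonneg _) (Real.sqrt_nonneg _)) (l2_nonneg _) (by linarith) hnorm

theorem drip_recovery {n p d k : ℕ} (hk : 0 < k) (hkd : k ≤ d)
    (Φ : Matrix (Fin n) (Fin p) ℝ) (D : Matrix (Fin p) (Fin d) ℝ)
    (hD : D * D.transpose = 1)
    (δ : ℝ) (hδ0 : 0 ≤ δ) (hδ : δ < 2 / 3) (hRIP : DRIP Φ D (2 * k) δ)
    (β βhat : Fin p → ℝ) (z y : Fin n → ℝ) (ε : ℝ)
    (hy : y = Φ.mulVec β + z) (hz : l2 z ≤ ε)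
    (hfeas : l2 (y - Φ.mulVec βhat) ≤ ε)
    (hmin : ∀ γ : Fin p → ℝ, l2 (y - Φ.mulVec γ) ≤ ε →
      l1 (D.transpose.mulVec βhat) ≤ l1 (D.transpose.mulVec γ))
    (Ω : Finset (Fin d)) (hΩ : IsLargestK k (D.transpose.mulVec β) Ω) :
    l2 (β - βhat) ≤ (8 * Real.sqrt (1 + δ)) / (3 * (2 / 3 - δ)) * ε
      + (2 + 2 * (4 * δ + Real.sqrt (6 * δ * (2 / 3 - δ))) / (3 * (2 / 3 - δ)))
        * (l1 (restrict Ωᶜ (D.transpose.mulVec β)) / Real.sqrt k) :=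
  drip_recovery_general hk Φ D hD δ hδ0 hδ hRIP β βhat z y ε hy hz hfeas hmin Ω hΩ
end
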